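/- Fix Δx > 0, Δt > 0 and an integer M ≥ 1. Let u : ℤ × ℤ → ℝ be a grid function with u(m + M, n) = u(m, n) for all (m,n) (spatial M-periodicity), and suppose u satisfies the narrow box scheme at every point: D_n(μ_m u_{-1,0}) + D_m( (1/3)·(μ_n u_{-1,0})³ + D_m²μ_n u_{-2,0} ) = 0. Then the discrete mass Σ_{i=0}^{M−1} (μ_m u_{-1,0})(i, n) is independent of n. -/

import Mathlib

noncomputable section

/-- Shift operator: `(Sh i j u)(m,n) = u(m+i, n+j)`. -/
def Sh (i j : ℤ) (f : ℤ × ℤ → ℝ) : ℤ × ℤ → ℝ := fun p => f (p.1 + i, p.2 + j)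

/-- Forward difference in space: `D_m f = (S_m f − f)/Δx`. -/
def Dm (dx : ℝ) (f : ℤ × ℤ → ℝ) : ℤ × ℤ → ℝ := fun p => (f (p.1 + 1, p.2) - f p) / dx

/-- Forward difference in time: `D_n f = (S_n f − f)/Δt`. -/
def Dn (dt : ℝ) (f : ℤ × ℤ → ℝ) : ℤ × ℤ → ℝ := fun p => (f (p.1, p.2 + 1) - f p) / dt

/-- Forward average in space: `μ_m f = (S_m f + f)/2`. -/
def μm (f : ℤ × ℤ → ℝ) : ℤ × ℤ → ℝ := fun p => (f (p.1 + 1, p.2) + f p) / 2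

/-- Forward average in time: `μ_n f = (S_n f + f)/2`. -/
def μn (f : ℤ × ℤ → ℝ) : ℤ × ℤ → ℝ := fun p => (f (p.1, p.2 + 1) + f p) / 2

/-- Spatially periodic solutions of the narrow box scheme conserve the discrete mass. -/
theorem narrowBox_discrete_mass_invariant (dx dt : ℝ) (hdx : 0 < dx) (hdt : 0 < dt)
    (M : ℕ) (hM : 1 ≤ M) (u : ℤ × ℤ → ℝ)
    (hper : ∀ m n : ℤ, u (m + (M : ℤ), n) = u (m, n))
    (hscheme : ∀ p : ℤ × ℤ,
      (Dn dt (μm (Sh (-1) 0 u))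
        + Dm dx ((1/3 : ℝ) • (μn (Sh (-1) 0 u)) ^ 3 + Dm dx (Dm dx (μn (Sh (-2) 0 u))))) p
        = 0) :
    ∀ n₁ n₂ : ℤ,
      (∑ i ∈ Finset.range M, μm (Sh (-1) 0 u) ((i : ℤ), n₁))
        = ∑ i ∈ Finset.range M, μm (Sh (-1) 0 u) ((i : ℤ), n₂) := by
  set F : ℤ × ℤ → ℝ :=
    (1/3 : ℝ) • (μn (Sh (-1) 0 u)) ^ 3 + Dm dx (Dm dx (μn (Sh (-2) 0 u))) with hFdef
  have hshift : ∀ x y z : ℤ, u (x + (M : ℤ) + y, z) = u (x + y, z) := by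
    intro x y z
    rw [show x + (M : ℤ) + y = (x + y) + M by ring, hper]
  have hFper : ∀ m n : ℤ, F (m + (M : ℤ), n) = F (m, n) := by
    intro m n
    simp only [hFdef, Pi.add_apply, Pi.smul_apply, Pi.pow_apply, smul_eq_mul,
      Dm, μn, Sh]
    rw [show m + (M : ℤ) + 1 + 1 + -2 = (m + 1 + 1 + -2) + (M : ℤ) by ring,
      show m + (M : ℤ) + 1 + -2 = (m + 1 + -2) + (M : ℤ) by ring,
      show m + (M : ℤ) + -2 = (m + -2) + (M : ℤ) by ring,
      show m + (M : ℤ) + -1 = (m + -1) + (M : ℤ) by ring]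
    simp only [hper]
  have key : ∀ n : ℤ,
      (∑ i ∈ Finset.range M, μm (Sh (-1) 0 u) ((i : ℤ), n + 1))
        = ∑ i ∈ Finset.range M, μm (Sh (-1) 0 u) ((i : ℤ), n) := by
    intro n
    have hstep : ∀ m : ℤ, μm (Sh (-1) 0 u) (m, n + 1)
        = μm (Sh (-1) 0 u) (m, n) - (dt / dx) * (F (m + 1, n) - F (m, n)) := by
      intro m
      have h := hscheme (m, n)
      simp only [Pi.add_apply, Dn, Dm] at h
      field_simp at h ⊢
      linarith [h]
    have htel : (∑ i ∈ Finset.range M, (F ((i : ℤ) + 1, n) - F ((i : ℤ), n)))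
        = F ((M : ℤ), n) - F ((0 : ℤ), n) := by
      have := Finset.sum_range_sub (fun i : ℕ => F ((i : ℤ), n)) M
      simpa [Int.add_comm] using this
    have hF0 : F ((M : ℤ), n) = F ((0 : ℤ), n) := by
      have := hFper 0 n
      simpa using this
    calc (∑ i ∈ Finset.range M, μm (Sh (-1) 0 u) ((i : ℤ), n + 1))
        = ∑ i ∈ Finset.range M,
            (μm (Sh (-1) 0 u) ((i : ℤ), n)
              - (dt / dx) * (F ((i : ℤ) + 1, n) - F ((i : ℤ), n))) := by
          exact Finset.sum_congr rfl fun i _ => hstep (i : ℤ)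
      _ = (∑ i ∈ Finset.range M, μm (Sh (-1) 0 u) ((i : ℤ), n))
            - (dt / dx) * ∑ i ∈ Finset.range M, (F ((i : ℤ) + 1, n) - F ((i : ℤ), n)) := by
          rw [Finset.sum_sub_distrib, Finset.mul_sum]
      _ = ∑ i ∈ Finset.range M, μm (Sh (-1) 0 u) ((i : ℤ), n) := by
          rw [htel, hF0]; ring
  have hconst : ∀ n : ℤ,
      (∑ i ∈ Finset.range M, μm (Sh (-1) 0 u) ((i : ℤ), n))
        = ∑ i ∈ Finset.range M, μm (Sh (-1) 0 u) ((i : ℤ), 0) := by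
    intro n
    induction n using Int.induction_on with
    | zero => rfl
    | succ k ih => rw [key k, ih]
    | pred k ih => rw [← ih, ← key (-(k : ℤ) - 1)]; norm_num
  intro n₁ n₂
  rw [hconst n₁, hconst n₂]
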